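/- arXiv:2103.00961 — 5 statements merged into one kernel-verified Lean document; each statement's English description precedes it below -/
import Mathlib

section
/- Let Q_x ⊆ ℝ^n be convex, Q_y ⊆ ℝ^m, ν ∈ [0,1], L_xy > 0, and let f : Q_x × Q_y → ℝ be differentiable in x with ‖∇_x f(x,y) - ∇_x f(x,y')‖₂ ≤ L_xy‖y - y'‖₂^ν for all x ∈ Q_x and y, y' ∈ Q_y. Then for all x₁, x₂ ∈ Q_x and y₁, y₂ ∈ Q_y one has (f(x₁,y₁) - f(x₁,y₂)) - (f(x₂,y₁) - f(x₂,y₂)) ≤ L_xy‖y₁ - y₂‖₂^ν · ‖x₂ - x₁‖₂. -/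
open scoped RealInnerProductSpace

/-- If the partial gradient `∇ₓ f(x,·)` is `ν`-Hölder in `y` with constant
`L_xy`, then `(f(x₁,y₁) - f(x₁,y₂)) - (f(x₂,y₁) - f(x₂,y₂)) ≤ L_xy ‖y₁-y₂‖^ν ‖x₂-x₁‖`. -/
theorem stmt_1 {n m : ℕ}
    (Qx : Set (EuclideanSpace ℝ (Fin n))) (Qy : Set (EuclideanSpace ℝ (Fin m)))
    (hQx : Convex ℝ Qx)
    (ν : ℝ) (hν : ν ∈ Set.Icc (0 : ℝ) 1) (Lxy : ℝ) (hLxy : 0 < Lxy)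
    (f : EuclideanSpace ℝ (Fin n) → EuclideanSpace ℝ (Fin m) → ℝ)
    (fx : EuclideanSpace ℝ (Fin n) → EuclideanSpace ℝ (Fin m) → EuclideanSpace ℝ (Fin n))
    (hdiff : ∀ x ∈ Qx, ∀ y ∈ Qy, HasGradientAt (fun x' => f x' y) (fx x y) x)
    (hHolder : ∀ x ∈ Qx, ∀ y ∈ Qy, ∀ y' ∈ Qy,
      ‖fx x y - fx x y'‖ ≤ Lxy * ‖y - y'‖ ^ ν) :
    ∀ x₁ ∈ Qx, ∀ x₂ ∈ Qx, ∀ y₁ ∈ Qy, ∀ y₂ ∈ Qy,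
      (f x₁ y₁ - f x₁ y₂) - (f x₂ y₁ - f x₂ y₂) ≤ Lxy * ‖y₁ - y₂‖ ^ ν * ‖x₂ - x₁‖ := by
  intro x₁ hx₁ x₂ hx₂ y₁ hy₁ y₂ hy₂
  set g : EuclideanSpace ℝ (Fin n) → ℝ := fun x => f x y₁ - f x y₂ with hg
  have hderiv : ∀ x ∈ Qx, HasFDerivWithinAt g
      (InnerProductSpace.toDual ℝ _ (fx x y₁ - fx x y₂)) Qx x := by
    intro x hx
    have h1 : HasGradientAt g (fx x y₁ - fx x y₂) x := by
      rw [hasGradientAt_iff_hasFDerivAt, map_sub]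
      exact ((hdiff x hx y₁ hy₁).hasFDerivAt).sub ((hdiff x hx y₂ hy₂).hasFDerivAt)
    exact h1.hasFDerivAt.hasFDerivWithinAt
  have hbound : ∀ x ∈ Qx,
      ‖InnerProductSpace.toDual ℝ _ (fx x y₁ - fx x y₂)‖ ≤ Lxy * ‖y₁ - y₂‖ ^ ν := by
    intro x hx
    rw [(InnerProductSpace.toDual ℝ _).norm_map]
    exact hHolder x hx y₁ hy₁ y₂ hy₂
  have key := hQx.norm_image_sub_le_of_norm_hasFDerivWithin_le hderiv hbound hx₂ hx₁
  calc g x₁ - g x₂ ≤ ‖g x₁ - g x₂‖ := le_abs_self _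
    _ ≤ Lxy * ‖y₁ - y₂‖ ^ ν * ‖x₁ - x₂‖ := key
    _ = Lxy * ‖y₁ - y₂‖ ^ ν * ‖x₂ - x₁‖ := by rw [norm_sub_rev x₁ x₂]
end

section
/- Let Q_x ⊆ ℝ^n be convex, Q_y ⊆ ℝ^m be convex and compact, ν ∈ [0,1], L_xy > 0, μ_y > 0. Let f : Q_x × Q_y → ℝ be differentiable, with ‖∇_x f(x,y) - ∇_x f(x,y')‖₂ ≤ L_xy‖y - y'‖₂^ν for all x ∈ Q_x, y, y' ∈ Q_y, and with f(x,·) μ_y-strongly concave on Q_y for every x ∈ Q_x. Let y*(x) denote the unique maximizer of f(x,·) over Q_y. Then for all x₁, x₂ ∈ Q_x: ‖y*(x₁) - y*(x₂)‖₂ ≤ (2L_xy/μ_y)^{1/(2-ν)} ‖x₁ - x₂‖₂^{1/(2-ν)}, i.e., x ↦ y*(x) is Hölder continuous with constant (2L_xy/μ_y)^{1/(2-ν)} and exponent 1/(2-ν). -/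
/-!
Write `y₁ = y*(x₁)`, `y₂ = y*(x₂)` and `D = ‖y₁ - y₂‖`. Strong concavity gives quadratic growth
around a maximizer, `f(x, y) ≤ f(x, y*(x)) - μ_y/4 ‖y - y*(x)‖²`, so adding the two instances at
`x₁` and `x₂` bounds the mixed difference `[f(x₁,y₁) - f(x₁,y₂)] - [f(x₂,y₁) - f(x₂,y₂)]` from below
by `μ_y/2 · D²`. The mean value inequality in `x`, applied to `x ↦ f(x,y₁) - f(x,y₂)` whose gradient
is bounded by `L_xy D^ν`, bounds it from above by `L_xy D^ν ‖x₁ - x₂‖`. Hence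
`D^{2-ν} ≤ (2 L_xy / μ_y) ‖x₁ - x₂‖`.
-/

open scoped RealInnerProductSpace
open InnerProductSpace Set

section Gradient

variable {E : Type*} [NormedAddCommGroup E] [InnerProductSpace ℝ E] [CompleteSpace E]

theorem HasGradientAt.hasDerivAt_comp_add_smul {F : E → ℝ} {G p d : E} {t : ℝ}
    (h : HasGradientAt F G (p + t • d)) :
    HasDerivAt (fun s : ℝ => F (p + s • d)) ⟪G, d⟫ t := by
  have hline : HasDerivAt (fun s : ℝ => p + s • d) d t := by
    simpa using ((hasDerivAt_id t).smul_const d).const_add p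
  simpa [Function.comp_def] using (hasGradientAt_iff_hasFDerivAt.mp h).comp_hasDerivAt t hline

theorem IsMaxOn.inner_sub_nonpos_of_hasGradientAt {F : E → ℝ} {G : E} {Q : Set E}
    (hQ : Convex ℝ Q) {y₀ y : E} (hmax : IsMaxOn F Q y₀) (hF : HasGradientAt F G y₀)
    (hy₀ : y₀ ∈ Q) (hy : y ∈ Q) : ⟪G, y - y₀⟫ ≤ 0 := by
  simpa using hmax.localize.hasFDerivWithinAt_nonpos
    (hasGradientAt_iff_hasFDerivAt.mp hF).hasFDerivWithinAt
    (sub_mem_posTangentConeAt_of_segment_subset (hQ.segment_subset hy₀ hy))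

theorem Convex.sub_sub_sub_le_of_norm_sub_gradient_le {s : Set E} (hs : Convex ℝ s)
    {F₁ F₂ : E → ℝ} {G₁ G₂ : E → E} {C : ℝ}
    (hF₁ : ∀ x ∈ s, HasGradientAt F₁ (G₁ x) x) (hF₂ : ∀ x ∈ s, HasGradientAt F₂ (G₂ x) x)
    (hC : ∀ x ∈ s, ‖G₁ x - G₂ x‖ ≤ C) {a b : E} (ha : a ∈ s) (hb : b ∈ s) :
    (F₁ a - F₂ a) - (F₁ b - F₂ b) ≤ C * ‖a - b‖ := by
  have hderiv : ∀ x ∈ s, HasFDerivWithinAt (fun x => F₁ x - F₂ x)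
      (toDual ℝ E (G₁ x) - toDual ℝ E (G₂ x)) s x := fun x hx =>
    ((hF₁ x hx).hasFDerivAt.sub (hF₂ x hx).hasFDerivAt).hasFDerivWithinAt
  have hbound : ∀ x ∈ s, ‖toDual ℝ E (G₁ x) - toDual ℝ E (G₂ x)‖ ≤ C := fun x hx => by
    simpa only [← map_sub, LinearIsometryEquiv.norm_map] using hC x hx
  exact (le_abs_self _).trans (hs.norm_image_sub_le_of_norm_hasFDerivWithin_le hderiv hbound hb ha)

section StronglyConcave

variable {F : E → ℝ} {g : E → E} {Q : Set E} {μ : ℝ} {y₀ y : E}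

theorem IsMaxOn.inner_add_smul_sub_le (hQ : Convex ℝ Q) (hF : HasGradientAt F (g y₀) y₀)
    (hconc : ∀ y₁ ∈ Q, ∀ y₂ ∈ Q, ⟪g y₂ - g y₁, y₁ - y₂⟫ ≥ μ * ‖y₁ - y₂‖ ^ 2)
    (hmax : IsMaxOn F Q y₀) (hy₀ : y₀ ∈ Q) (hy : y ∈ Q) {t : ℝ} (ht : t ∈ Ioc 0 1) :
    ⟪g (y₀ + t • (y - y₀)), y - y₀⟫ ≤ -(μ * t * ‖y - y₀‖ ^ 2) := by
  set d := y - y₀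
  have hmono := hconc _ (hQ.add_smul_sub_mem hy₀ hy (Ioc_subset_Icc_self ht)) y₀ hy₀
  rw [add_sub_cancel_left, real_inner_smul_right, inner_sub_left, norm_smul, mul_pow,
    Real.norm_eq_abs, sq_abs] at hmono
  have hfirst_order : ⟪g y₀, d⟫ ≤ 0 := hmax.inner_sub_nonpos_of_hasGradientAt hQ hF hy₀ hy
  nlinarith [ht.1]

/-- The constant `μ / 4` (rather than the sharp `μ / 2`) comes from the mean value theorem on the
second half `[1/2, 1]` of the segment, where the slope is at most `-μ/2 ‖y - y₀‖²`. -/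
theorem IsMaxOn.le_sub_mul_norm_sub_sq (hQ : Convex ℝ Q) (hμ : 0 ≤ μ)
    (hF : ∀ y ∈ Q, HasGradientAt F (g y) y)
    (hconc : ∀ y₁ ∈ Q, ∀ y₂ ∈ Q, ⟪g y₂ - g y₁, y₁ - y₂⟫ ≥ μ * ‖y₁ - y₂‖ ^ 2)
    (hmax : IsMaxOn F Q y₀) (hy₀ : y₀ ∈ Q) (hy : y ∈ Q) :
    F y ≤ F y₀ - μ / 4 * ‖y - y₀‖ ^ 2 := by
  set d := y - y₀
  have hseg : ∀ t ∈ Icc (0 : ℝ) 1, y₀ + t • d ∈ Q := fun t ht => hQ.add_smul_sub_mem hy₀ hy ht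
  have hderiv : ∀ t ∈ Icc (0 : ℝ) 1,
      HasDerivAt (fun s : ℝ => F (y₀ + s • d)) ⟪g (y₀ + t • d), d⟫ t := fun t ht =>
    (hF _ (hseg t ht)).hasDerivAt_comp_add_smul
  obtain ⟨c, hc, hslope⟩ := exists_hasDerivAt_eq_slope (fun s : ℝ => F (y₀ + s • d))
    (fun t => ⟪g (y₀ + t • d), d⟫) (by norm_num : (1 / 2 : ℝ) < 1)
    (fun t ht => (hderiv t ⟨by linarith [ht.1], ht.2⟩).continuousAt.continuousWithinAt)
    (fun t ht => hderiv t ⟨by linarith [ht.1], ht.2.le⟩)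
  have hc_slope := hmax.inner_add_smul_sub_le hQ (hF y₀ hy₀) hconc hy₀ hy
    ⟨by linarith [hc.1], hc.2.le⟩
  have hmid : F (y₀ + (1 / 2 : ℝ) • d) ≤ F y₀ := hmax (hseg _ ⟨by norm_num, by norm_num⟩)
  have hend : y₀ + (1 : ℝ) • d = y := by simp only [one_smul, d, add_sub_cancel]
  rw [hend, show (1 : ℝ) - 1 / 2 = 1 / 2 by norm_num] at hslope
  rw [hslope, div_le_iff₀ (by norm_num)] at hc_slope
  nlinarith [hc.1, mul_nonneg hμ (sq_nonneg ‖d‖)]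

end StronglyConcave

end Gradient

theorem le_rpow_one_div_of_sq_le_mul_rpow {D c ν : ℝ} (hD : 0 ≤ D) (hc : 0 ≤ c) (hν : ν < 2)
    (h : D ^ 2 ≤ c * D ^ ν) : D ≤ c ^ (1 / (2 - ν)) := by
  rcases hD.eq_or_lt with rfl | hDpos
  · positivity
  have hpow : D ^ (2 - ν) ≤ c := by
    rw [Real.rpow_sub hDpos, Real.rpow_two, div_le_iff₀ (Real.rpow_pos_of_pos hDpos ν)]
    exact h
  calc D = (D ^ (2 - ν)) ^ (1 / (2 - ν)) := by
        rw [← Real.rpow_mul hD, mul_one_div_cancel (by linarith), Real.rpow_one]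
    _ ≤ c ^ (1 / (2 - ν)) := by gcongr

theorem stmt_2_general {n m : ℕ}
    (Qx : Set (EuclideanSpace ℝ (Fin n))) (Qy : Set (EuclideanSpace ℝ (Fin m)))
    (hQx : Convex ℝ Qx) (hQy : Convex ℝ Qy)
    (ν : ℝ) (hν : ν ∈ Set.Icc (0 : ℝ) 1)
    (Lxy μy : ℝ) (hLxy : 0 < Lxy) (hμy : 0 < μy)
    (f : EuclideanSpace ℝ (Fin n) → EuclideanSpace ℝ (Fin m) → ℝ)
    (fx : EuclideanSpace ℝ (Fin n) → EuclideanSpace ℝ (Fin m) → EuclideanSpace ℝ (Fin n))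
    (fy : EuclideanSpace ℝ (Fin n) → EuclideanSpace ℝ (Fin m) → EuclideanSpace ℝ (Fin m))
    (hdiffx : ∀ x ∈ Qx, ∀ y ∈ Qy, HasGradientAt (fun x' => f x' y) (fx x y) x)
    (hdiffy : ∀ x ∈ Qx, ∀ y ∈ Qy, HasGradientAt (fun y' => f x y') (fy x y) y)
    (hHolder : ∀ x ∈ Qx, ∀ y ∈ Qy, ∀ y' ∈ Qy,
      ‖fx x y - fx x y'‖ ≤ Lxy * ‖y - y'‖ ^ ν)
    -- `f(x,·)` is `μ_y`-strongly concave on `Q_y` for every `x ∈ Q_x`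
    (hconc : ∀ x ∈ Qx, ∀ y₁ ∈ Qy, ∀ y₂ ∈ Qy,
      ⟪fy x y₂ - fy x y₁, y₁ - y₂⟫ ≥ μy * ‖y₁ - y₂‖ ^ 2)
    -- `y*(x)` is the (unique) maximizer of `f(x,·)` over `Q_y`
    (ystar : EuclideanSpace ℝ (Fin n) → EuclideanSpace ℝ (Fin m))
    (hystar : ∀ x ∈ Qx, ystar x ∈ Qy ∧ ∀ y ∈ Qy, f x y ≤ f x (ystar x)) :
    ∀ x₁ ∈ Qx, ∀ x₂ ∈ Qx,
      ‖ystar x₁ - ystar x₂‖ ≤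
        (2 * Lxy / μy) ^ ((1 : ℝ) / (2 - ν)) * ‖x₁ - x₂‖ ^ ((1 : ℝ) / (2 - ν)) := by
  intro x₁ hx₁ x₂ hx₂
  obtain ⟨hy₁, hmax₁⟩ := hystar x₁ hx₁
  obtain ⟨hy₂, hmax₂⟩ := hystar x₂ hx₂
  set D := ‖ystar x₁ - ystar x₂‖
  have hgrowth₁ : f x₁ (ystar x₂) ≤ f x₁ (ystar x₁) - μy / 4 * D ^ 2 := by
    simpa only [norm_sub_rev] using IsMaxOn.le_sub_mul_norm_sub_sq hQy hμy.le (hdiffy x₁ hx₁)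
      (hconc x₁ hx₁) (isMaxOn_iff.mpr hmax₁) hy₁ hy₂
  have hgrowth₂ : f x₂ (ystar x₁) ≤ f x₂ (ystar x₂) - μy / 4 * D ^ 2 :=
    IsMaxOn.le_sub_mul_norm_sub_sq hQy hμy.le (hdiffy x₂ hx₂) (hconc x₂ hx₂)
      (isMaxOn_iff.mpr hmax₂) hy₂ hy₁
  have hmixed := hQx.sub_sub_sub_le_of_norm_sub_gradient_le (fun x hx => hdiffx x hx _ hy₁)
    (fun x hx => hdiffx x hx _ hy₂) (fun x hx => hHolder x hx _ hy₁ _ hy₂) hx₁ hx₂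
  have hkey : D ^ 2 ≤ 2 * Lxy / μy * ‖x₁ - x₂‖ * D ^ ν := by
    rw [div_mul_eq_mul_div, div_mul_eq_mul_div, le_div_iff₀ hμy]
    linarith
  calc D ≤ (2 * Lxy / μy * ‖x₁ - x₂‖) ^ ((1 : ℝ) / (2 - ν)) :=
        le_rpow_one_div_of_sq_le_mul_rpow (norm_nonneg _) (by positivity) (by linarith [hν.2]) hkey
    _ = _ := Real.mul_rpow (by positivity) (norm_nonneg _)

/-- Hölder continuity of `x ↦ y*(x)`, the maximizer of the `μ_y`-strongly
concave function `f(x,·)` over the convex compact set `Q_y`, when `∇ₓ f` is `ν`-Hölder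
in `y` with constant `L_xy`:
`‖y*(x₁) - y*(x₂)‖ ≤ (2 L_xy / μ_y)^{1/(2-ν)} ‖x₁ - x₂‖^{1/(2-ν)}`. -/
theorem stmt_2 {n m : ℕ}
    (Qx : Set (EuclideanSpace ℝ (Fin n))) (Qy : Set (EuclideanSpace ℝ (Fin m)))
    (hQx : Convex ℝ Qx) (hQy : Convex ℝ Qy) (hQyc : IsCompact Qy)
    (ν : ℝ) (hν : ν ∈ Set.Icc (0 : ℝ) 1)
    (Lxy μy : ℝ) (hLxy : 0 < Lxy) (hμy : 0 < μy)
    (f : EuclideanSpace ℝ (Fin n) → EuclideanSpace ℝ (Fin m) → ℝ)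
    (fx : EuclideanSpace ℝ (Fin n) → EuclideanSpace ℝ (Fin m) → EuclideanSpace ℝ (Fin n))
    (fy : EuclideanSpace ℝ (Fin n) → EuclideanSpace ℝ (Fin m) → EuclideanSpace ℝ (Fin m))
    (hdiffx : ∀ x ∈ Qx, ∀ y ∈ Qy, HasGradientAt (fun x' => f x' y) (fx x y) x)
    (hdiffy : ∀ x ∈ Qx, ∀ y ∈ Qy, HasGradientAt (fun y' => f x y') (fy x y) y)
    (hHolder : ∀ x ∈ Qx, ∀ y ∈ Qy, ∀ y' ∈ Qy,
      ‖fx x y - fx x y'‖ ≤ Lxy * ‖y - y'‖ ^ ν)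
    -- `f(x,·)` is `μ_y`-strongly concave on `Q_y` for every `x ∈ Q_x`
    (hconc : ∀ x ∈ Qx, ∀ y₁ ∈ Qy, ∀ y₂ ∈ Qy,
      ⟪fy x y₂ - fy x y₁, y₁ - y₂⟫ ≥ μy * ‖y₁ - y₂‖ ^ 2)
    -- `y*(x)` is the (unique) maximizer of `f(x,·)` over `Q_y`
    (ystar : EuclideanSpace ℝ (Fin n) → EuclideanSpace ℝ (Fin m))
    (hystar : ∀ x ∈ Qx, ystar x ∈ Qy ∧ ∀ y ∈ Qy, f x y ≤ f x (ystar x)) :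
    ∀ x₁ ∈ Qx, ∀ x₂ ∈ Qx,
      ‖ystar x₁ - ystar x₂‖ ≤
        (2 * Lxy / μy) ^ ((1 : ℝ) / (2 - ν)) * ‖x₁ - x₂‖ ^ ((1 : ℝ) / (2 - ν)) :=
  stmt_2_general Qx Qy hQx hQy ν hν Lxy μy hLxy hμy f fx fy hdiffx hdiffy hHolder hconc ystar hystar
end

section
/- (Lemma 1) Let Q_x ⊆ ℝ^n be convex and bounded with ‖x₁ - x₂‖₂ ≤ D for all x₁, x₂ ∈ Q_x, and let Q_y ⊆ ℝ^m be convex and compact. Let ν ∈ [0,1], L_xx, L_xy > 0, μ_y > 0, and let f : Q_x × Q_y → ℝ be differentiable with ‖∇_x f(x,y) - ∇_x f(x',y)‖₂ ≤ L_xx‖x - x'‖₂^ν and ‖∇_x f(x,y) - ∇_x f(x,y')‖₂ ≤ L_xy‖y - y'‖₂^ν for all x, x' ∈ Q_x, y, y' ∈ Q_y, and with f(x,·) μ_y-strongly concave on Q_y for every x ∈ Q_x. Let y*(x) be the unique maximizer of f(x,·) over Q_y. Then for all x₁, x₂ ∈ Q_x: ‖∇_x f(x₁, y*(x₁)) - ∇_x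 f(x₂, y*(x₂))‖₂ ≤ ( L_xy (2L_xy/μ_y)^{ν/(2-ν)} + L_xx D^{(ν-ν²)/(2-ν)} ) ‖x₁ - x₂‖₂^{ν/(2-ν)}. -/
open scoped RealInnerProductSpace

/-!
Strong concavity makes `y*(x)` a point of quadratic growth:
`f(x,y) + μ_y/2 ‖y - y*(x)‖² ≤ f(x,y*(x))`. Adding this at `x₁` and `x₂` bounds
`μ_y ‖y*(x₁) - y*(x₂)‖²` by the cross difference of `f` at the four points, which the mean value
theorem in `x` and the Hölder continuity of `∇ₓf` in `y` bound by
`L_xy ‖y*(x₁) - y*(x₂)‖^ν ‖x₁ - x₂‖`. Solving gives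
`‖y*(x₁) - y*(x₂)‖^ν ≤ (L_xy/μ_y)^{ν/(2-ν)} ‖x₁ - x₂‖^{ν/(2-ν)}`; the triangle inequality through
`∇ₓf(x₁, y*(x₂))` and `‖x₁ - x₂‖^ν ≤ D^{(ν-ν²)/(2-ν)} ‖x₁ - x₂‖^{ν/(2-ν)}` finish the proof.
-/

open Set

section Gradient

variable {E : Type*} [NormedAddCommGroup E] [InnerProductSpace ℝ E] [CompleteSpace E]
  {g : E → ℝ} {G : E → E} {s : Set E} {u v d g' : E}

theorem HasGradientAt.hasDerivAt_add_smul {t : ℝ} (hg : HasGradientAt g g' (u + t • d)) :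
    HasDerivAt (fun τ : ℝ => g (u + τ • d)) ⟪g', d⟫ t := by
  have hline : HasDerivAt (fun τ : ℝ => u + τ • d) d t := by
    simpa using ((hasDerivAt_id t).smul_const d).const_add u
  simpa [Function.comp_def] using hg.hasFDerivAt.comp_hasDerivAt t hline

theorem HasGradientAt.sub {h : E → ℝ} {h' x : E} (hg : HasGradientAt g g' x)
    (hh : HasGradientAt h h' x) : HasGradientAt (fun y => g y - h y) (g' - h') x := by
  rw [hasGradientAt_iff_hasFDerivAt, map_sub]
  exact hg.hasFDerivAt.sub hh.hasFDerivAt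

theorem IsMaxOn.inner_sub_nonpos_of_hasGradientAt_s3 (hs : Convex ℝ s) (hmax : IsMaxOn g s u)
    (hu : u ∈ s) (hg : HasGradientAt g g' u) (hv : v ∈ s) : ⟪g', v - u⟫ ≤ 0 := by
  simpa using hmax.localize.hasFDerivWithinAt_nonpos hg.hasFDerivAt.hasFDerivWithinAt
    (sub_mem_posTangentConeAt_of_segment_subset (hs.segment_subset hu hv))

theorem IsMaxOn.add_half_mul_norm_sub_sq_le (hs : Convex ℝ s) {μ : ℝ}
    (hg : ∀ y ∈ s, HasGradientAt g (G y) y)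
    (hG : ∀ y₁ ∈ s, ∀ y₂ ∈ s, μ * ‖y₁ - y₂‖ ^ 2 ≤ ⟪G y₂ - G y₁, y₁ - y₂⟫)
    (hmax : IsMaxOn g s u) (hu : u ∈ s) (hv : v ∈ s) :
    g v + μ / 2 * ‖v - u‖ ^ 2 ≤ g u := by
  set d := v - u
  have hseg : ∀ t ∈ Icc (0 : ℝ) 1, u + t • d ∈ s := fun t ht => hs.add_smul_sub_mem hu hv ht
  have hderiv : ∀ t ∈ Icc (0 : ℝ) 1,
      HasDerivAt (fun τ : ℝ => g (u + τ • d) + μ / 2 * ‖d‖ ^ 2 * τ ^ 2)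
        (⟪G (u + t • d), d⟫ + μ * ‖d‖ ^ 2 * t) t := fun t ht => by
    have hsq : HasDerivAt (fun τ : ℝ => μ / 2 * ‖d‖ ^ 2 * τ ^ 2) (μ * ‖d‖ ^ 2 * t) t :=
      ((hasDerivAt_pow 2 t).const_mul _).congr_deriv (by push_cast; ring)
    exact (hg _ (hseg t ht)).hasDerivAt_add_smul.add hsq
  -- `⟪G u, d⟫ ≤ 0` by optimality of `u`, and strong monotonicity lowers the slope further along `d`.
  have hslope : ∀ t ∈ Ioo (0 : ℝ) 1, ⟪G (u + t • d), d⟫ + μ * ‖d‖ ^ 2 * t ≤ 0 := by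
    intro t ht
    have hopt := hmax.inner_sub_nonpos_of_hasGradientAt_s3 hs hu (hg u hu) hv
    have hmono := hG u hu (u + t • d) (hseg t (Ioo_subset_Icc_self ht))
    rw [sub_add_cancel_left, norm_neg, norm_smul, Real.norm_of_nonneg ht.1.le, inner_neg_right,
      real_inner_smul_right, inner_sub_left] at hmono
    nlinarith [ht.1]
  have hanti := antitoneOn_of_hasDerivWithinAt_nonpos (convex_Icc (0 : ℝ) 1)
    (fun t ht => (hderiv t ht).continuousAt.continuousWithinAt)
    (fun t ht => (hderiv t (interior_subset ht)).hasDerivWithinAt)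
    (fun t ht => hslope t (by rwa [interior_Icc] at ht))
    (left_mem_Icc.2 zero_le_one) (right_mem_Icc.2 zero_le_one) zero_le_one
  simpa [d] using hanti

theorem Convex.norm_image_sub_le_of_norm_hasGradientAt_le (hs : Convex ℝ s)
    (hg : ∀ x ∈ s, HasGradientAt g (G x) x) {C : ℝ} (hC : ∀ x ∈ s, ‖G x‖ ≤ C)
    (hu : u ∈ s) (hv : v ∈ s) : ‖g v - g u‖ ≤ C * ‖v - u‖ :=
  hs.norm_image_sub_le_of_norm_hasFDerivWithin_le
    (fun x hx => (hg x hx).hasFDerivAt.hasFDerivWithinAt)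
    (fun x hx => by simpa using hC x hx) hu hv

theorem mul_norm_sub_sq_le_of_isMaxOn {F : Type*} [NormedAddCommGroup F] [InnerProductSpace ℝ F]
    [CompleteSpace F] {f : E → F → ℝ} {fx : E → F → E} {fy : E → F → F} {t : Set F} {μ C : ℝ}
    (hs : Convex ℝ s) (ht : Convex ℝ t)
    (hfx : ∀ x ∈ s, ∀ y ∈ t, HasGradientAt (fun x' => f x' y) (fx x y) x)
    (hfy : ∀ x ∈ s, ∀ y ∈ t, HasGradientAt (fun y' => f x y') (fy x y) y)
    (hconc : ∀ x ∈ s, ∀ y₁ ∈ t, ∀ y₂ ∈ t, μ * ‖y₁ - y₂‖ ^ 2 ≤ ⟪fy x y₂ - fy x y₁, y₁ - y₂⟫)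
    {x₁ x₂ : E} {y₁ y₂ : F} (hx₁ : x₁ ∈ s) (hx₂ : x₂ ∈ s) (hy₁ : y₁ ∈ t) (hy₂ : y₂ ∈ t)
    (hmax₁ : IsMaxOn (f x₁) t y₁) (hmax₂ : IsMaxOn (f x₂) t y₂)
    (hC : ∀ x ∈ s, ‖fx x y₁ - fx x y₂‖ ≤ C) :
    μ * ‖y₁ - y₂‖ ^ 2 ≤ C * ‖x₁ - x₂‖ := by
  have hgrowth₁ := hmax₁.add_half_mul_norm_sub_sq_le ht (hfy x₁ hx₁) (hconc x₁ hx₁) hy₁ hy₂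
  have hgrowth₂ := hmax₂.add_half_mul_norm_sub_sq_le ht (hfy x₂ hx₂) (hconc x₂ hx₂) hy₂ hy₁
  have hcross := hs.norm_image_sub_le_of_norm_hasGradientAt_le
    (fun x hx => (hfx x hx _ hy₁).sub (hfx x hx _ hy₂)) hC hx₁ hx₂
  rw [Real.norm_eq_abs, norm_sub_rev x₂] at hcross
  rw [norm_sub_rev] at hgrowth₁
  linarith [neg_abs_le (f x₂ y₁ - f x₂ y₂ - (f x₁ y₁ - f x₁ y₂))]

end Gradient

theorem Real.rpow_le_mul_rpow_of_mul_sq_le {a c r μ ν : ℝ} (ha : 0 ≤ a) (hc : 0 ≤ c) (hr : 0 ≤ r)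
    (hμ : 0 < μ) (hν₀ : 0 ≤ ν) (hν₂ : ν < 2) (h : μ * a ^ 2 ≤ c * a ^ ν * r) :
    a ^ ν ≤ (c / μ) ^ (ν / (2 - ν)) * r ^ (ν / (2 - ν)) := by
  rw [← Real.mul_rpow (by positivity) hr]
  rcases ha.eq_or_lt with rfl | ha
  · rcases hν₀.eq_or_lt with rfl | hν
    · simp
    · rw [Real.zero_rpow hν.ne']
      positivity
  have hsplit : a ^ 2 = a ^ ν * a ^ (2 - ν) := by
    rw [← Real.rpow_add ha, add_sub_cancel, ← Real.rpow_natCast]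
    norm_num
  have hle : a ^ (2 - ν) ≤ c / μ * r := by
    rw [hsplit] at h
    rw [div_mul_eq_mul_div, le_div_iff₀ hμ]
    nlinarith [Real.rpow_pos_of_pos ha ν]
  calc a ^ ν = (a ^ (2 - ν)) ^ (ν / (2 - ν)) := by
        rw [← Real.rpow_mul ha.le, mul_div_cancel₀ _ (by linarith : (2 : ℝ) - ν ≠ 0)]
    _ ≤ (c / μ * r) ^ (ν / (2 - ν)) := by gcongr

theorem Real.rpow_add_le_mul_rpow {r D p q : ℝ} (hr : 0 ≤ r) (hrD : r ≤ D) (hp : 0 ≤ p)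
    (hq : 0 ≤ q) : r ^ (p + q) ≤ D ^ p * r ^ q := by
  rw [Real.rpow_add_of_nonneg hr hp hq]
  gcongr

theorem stmt_3_general {n m : ℕ}
    (Qx : Set (EuclideanSpace ℝ (Fin n))) (Qy : Set (EuclideanSpace ℝ (Fin m)))
    (hQx : Convex ℝ Qx) (hQy : Convex ℝ Qy)
    (D : ℝ) (hdiam : ∀ x₁ ∈ Qx, ∀ x₂ ∈ Qx, ‖x₁ - x₂‖ ≤ D)
    (ν : ℝ) (hν : ν ∈ Set.Icc (0 : ℝ) 1)
    (Lxx Lxy μy : ℝ) (hLxx : 0 < Lxx) (hLxy : 0 < Lxy) (hμy : 0 < μy)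
    (f : EuclideanSpace ℝ (Fin n) → EuclideanSpace ℝ (Fin m) → ℝ)
    (fx : EuclideanSpace ℝ (Fin n) → EuclideanSpace ℝ (Fin m) → EuclideanSpace ℝ (Fin n))
    (fy : EuclideanSpace ℝ (Fin n) → EuclideanSpace ℝ (Fin m) → EuclideanSpace ℝ (Fin m))
    (hdiffx : ∀ x ∈ Qx, ∀ y ∈ Qy, HasGradientAt (fun x' => f x' y) (fx x y) x)
    (hdiffy : ∀ x ∈ Qx, ∀ y ∈ Qy, HasGradientAt (fun y' => f x y') (fy x y) y)
    (hHolderx : ∀ x ∈ Qx, ∀ x' ∈ Qx, ∀ y ∈ Qy,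
      ‖fx x y - fx x' y‖ ≤ Lxx * ‖x - x'‖ ^ ν)
    (hHoldery : ∀ x ∈ Qx, ∀ y ∈ Qy, ∀ y' ∈ Qy,
      ‖fx x y - fx x y'‖ ≤ Lxy * ‖y - y'‖ ^ ν)
    -- `f(x,·)` is `μ_y`-strongly concave on `Q_y` for every `x ∈ Q_x`
    (hconc : ∀ x ∈ Qx, ∀ y₁ ∈ Qy, ∀ y₂ ∈ Qy,
      ⟪fy x y₂ - fy x y₁, y₁ - y₂⟫ ≥ μy * ‖y₁ - y₂‖ ^ 2)
    -- `y*(x)` is the (unique) maximizer of `f(x,·)` over `Q_y`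
    (ystar : EuclideanSpace ℝ (Fin n) → EuclideanSpace ℝ (Fin m))
    (hystar : ∀ x ∈ Qx, ystar x ∈ Qy ∧ ∀ y ∈ Qy, f x y ≤ f x (ystar x)) :
    ∀ x₁ ∈ Qx, ∀ x₂ ∈ Qx,
      ‖fx x₁ (ystar x₁) - fx x₂ (ystar x₂)‖ ≤
        (Lxy * (2 * Lxy / μy) ^ (ν / (2 - ν)) + Lxx * D ^ ((ν - ν ^ 2) / (2 - ν))) *
          ‖x₁ - x₂‖ ^ (ν / (2 - ν)) := by
  intro x₁ hx₁ x₂ hx₂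
  obtain ⟨hν₀, hν₁⟩ := hν
  obtain ⟨hy₁, hmax₁⟩ := hystar x₁ hx₁
  obtain ⟨hy₂, hmax₂⟩ := hystar x₂ hx₂
  set a := ‖ystar x₁ - ystar x₂‖
  set r := ‖x₁ - x₂‖
  set e := ν / (2 - ν)
  set p := (ν - ν ^ 2) / (2 - ν)
  have h2ν : 0 < 2 - ν := by linarith
  have hya : a ^ ν ≤ (Lxy / μy) ^ e * r ^ e :=
    Real.rpow_le_mul_rpow_of_mul_sq_le (norm_nonneg _) hLxy.le (norm_nonneg _) hμy hν₀
      (by linarith) (mul_norm_sub_sq_le_of_isMaxOn hQx hQy hdiffx hdiffy hconc hx₁ hx₂ hy₁ hy₂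
        hmax₁ hmax₂ (fun x hx => hHoldery x hx _ hy₁ _ hy₂))
  have hxr : r ^ ν ≤ D ^ p * r ^ e := calc
    r ^ ν = r ^ (p + e) := by
      congr 1
      rw [← add_div, eq_div_iff h2ν.ne']
      ring
    _ ≤ D ^ p * r ^ e :=
      Real.rpow_add_le_mul_rpow (norm_nonneg _) (hdiam x₁ hx₁ x₂ hx₂)
        (div_nonneg (by nlinarith) h2ν.le) (div_nonneg hν₀ h2ν.le)
  calc ‖fx x₁ (ystar x₁) - fx x₂ (ystar x₂)‖
      ≤ ‖fx x₁ (ystar x₁) - fx x₁ (ystar x₂)‖ + ‖fx x₁ (ystar x₂) - fx x₂ (ystar x₂)‖ :=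
        norm_sub_le_norm_sub_add_norm_sub _ _ _
    _ ≤ Lxy * a ^ ν + Lxx * r ^ ν :=
        add_le_add (hHoldery x₁ hx₁ _ hy₁ _ hy₂) (hHolderx x₁ hx₁ x₂ hx₂ _ hy₂)
    _ ≤ Lxy * ((Lxy / μy) ^ e * r ^ e) + Lxx * (D ^ p * r ^ e) := by
        gcongr
    _ ≤ Lxy * ((2 * Lxy / μy) ^ e * r ^ e) + Lxx * (D ^ p * r ^ e) := by
        gcongr
        linarith
    _ = _ := by ring

/-- Lemma 1: Hölder continuity of `∇g(x) = ∇ₓ f(x, y*(x))` where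
`g(x) = max_{y ∈ Q_y} f(x,y)`, under Hölder conditions on `∇ₓ f` in both arguments
and `μ_y`-strong concavity of `f(x,·)`:
`‖∇ₓf(x₁,y*(x₁)) - ∇ₓf(x₂,y*(x₂))‖ ≤ (L_xy (2L_xy/μ_y)^{ν/(2-ν)} + L_xx D^{(ν-ν²)/(2-ν)}) ‖x₁-x₂‖^{ν/(2-ν)}`. -/
theorem stmt_3 {n m : ℕ}
    (Qx : Set (EuclideanSpace ℝ (Fin n))) (Qy : Set (EuclideanSpace ℝ (Fin m)))
    (hQx : Convex ℝ Qx) (hQy : Convex ℝ Qy) (hQyc : IsCompact Qy)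
    (D : ℝ) (hD : 0 < D) (hdiam : ∀ x₁ ∈ Qx, ∀ x₂ ∈ Qx, ‖x₁ - x₂‖ ≤ D)
    (ν : ℝ) (hν : ν ∈ Set.Icc (0 : ℝ) 1)
    (Lxx Lxy μy : ℝ) (hLxx : 0 < Lxx) (hLxy : 0 < Lxy) (hμy : 0 < μy)
    (f : EuclideanSpace ℝ (Fin n) → EuclideanSpace ℝ (Fin m) → ℝ)
    (fx : EuclideanSpace ℝ (Fin n) → EuclideanSpace ℝ (Fin m) → EuclideanSpace ℝ (Fin n))
    (fy : EuclideanSpace ℝ (Fin n) → EuclideanSpace ℝ (Fin m) → EuclideanSpace ℝ (Fin m))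
    (hdiffx : ∀ x ∈ Qx, ∀ y ∈ Qy, HasGradientAt (fun x' => f x' y) (fx x y) x)
    (hdiffy : ∀ x ∈ Qx, ∀ y ∈ Qy, HasGradientAt (fun y' => f x y') (fy x y) y)
    (hHolderx : ∀ x ∈ Qx, ∀ x' ∈ Qx, ∀ y ∈ Qy,
      ‖fx x y - fx x' y‖ ≤ Lxx * ‖x - x'‖ ^ ν)
    (hHoldery : ∀ x ∈ Qx, ∀ y ∈ Qy, ∀ y' ∈ Qy,
      ‖fx x y - fx x y'‖ ≤ Lxy * ‖y - y'‖ ^ ν)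
    -- `f(x,·)` is `μ_y`-strongly concave on `Q_y` for every `x ∈ Q_x`
    (hconc : ∀ x ∈ Qx, ∀ y₁ ∈ Qy, ∀ y₂ ∈ Qy,
      ⟪fy x y₂ - fy x y₁, y₁ - y₂⟫ ≥ μy * ‖y₁ - y₂‖ ^ 2)
    -- `y*(x)` is the (unique) maximizer of `f(x,·)` over `Q_y`
    (ystar : EuclideanSpace ℝ (Fin n) → EuclideanSpace ℝ (Fin m))
    (hystar : ∀ x ∈ Qx, ystar x ∈ Qy ∧ ∀ y ∈ Qy, f x y ≤ f x (ystar x)) :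
    ∀ x₁ ∈ Qx, ∀ x₂ ∈ Qx,
      ‖fx x₁ (ystar x₁) - fx x₂ (ystar x₂)‖ ≤
        (Lxy * (2 * Lxy / μy) ^ (ν / (2 - ν)) + Lxx * D ^ ((ν - ν ^ 2) / (2 - ν))) *
          ‖x₁ - x₂‖ ^ (ν / (2 - ν)) :=
  stmt_3_general Qx Qy hQx hQy D hdiam ν hν Lxx Lxy μy hLxx hLxy hμy f fx fy hdiffx hdiffy hHolderx
    hHoldery hconc ystar hystar
end

section
/- Let ν ∈ [0,1), L̃ > 0, δ > 0, and set L = L̃ · ( L̃(1-ν) / (2δ(1+ν)) )^{(1-ν)/(1+ν)}. Then for every t ≥ 0 one has (L̃/(1+ν)) t^{1+ν} ≤ (L/2) t² + δ. -/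
/-- For `ν ∈ [0,1)`, `L̃ > 0`, `δ > 0` and
`L = L̃ (L̃(1-ν)/(2δ(1+ν)))^{(1-ν)/(1+ν)}`, one has
`(L̃/(1+ν)) t^{1+ν} ≤ (L/2) t² + δ` for all `t ≥ 0`. -/
theorem stmt_4 (ν : ℝ) (hν : ν ∈ Set.Ico (0 : ℝ) 1)
    (Ltilde δ : ℝ) (hL : 0 < Ltilde) (hδ : 0 < δ)
    (L : ℝ)
    (hLdef : L = Ltilde * (Ltilde * (1 - ν) / (2 * δ * (1 + ν))) ^ ((1 - ν) / (1 + ν))) :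
    ∀ t : ℝ, 0 ≤ t → Ltilde / (1 + ν) * t ^ (1 + ν) ≤ L / 2 * t ^ 2 + δ := by
  obtain ⟨hν0, hν1⟩ := hν
  intro t ht
  have h1p : (0:ℝ) < 1 + ν := by linarith
  have h1m : (0:ℝ) < 1 - ν := by linarith
  set x := Ltilde / (1 + ν) with hx
  set y := 2 * δ / (1 - ν) with hy
  have hxpos : 0 < x := div_pos hL h1p
  have hypos : 0 < y := div_pos (by linarith) h1m
  have hxy : 0 < x / y := div_pos hxpos hypos
  have hLpos : 0 < L := by
    rw [hLdef]
    exact mul_pos hL (Real.rpow_pos_of_pos (by positivity) _)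
  have hLx : L / (1 + ν) = x * (x / y) ^ ((1 - ν) / (1 + ν)) := by
    have hb : Ltilde * (1 - ν) / (2 * δ * (1 + ν)) = x / y := by
      rw [hx, hy]; field_simp
    rw [hLdef, hb, hx]; ring
  have hexp : ((1 - ν) / (1 + ν)) * ((1 + ν) / 2) = (1 - ν) / 2 := by
    field_simp
  have hkey : (L / (1 + ν)) ^ ((1 + ν) / 2) * y ^ ((1 - ν) / 2) = x := by
    rw [hLx, Real.mul_rpow hxpos.le (Real.rpow_nonneg hxy.le _),
        ← Real.rpow_mul hxy.le, hexp, Real.div_rpow hxpos.le hypos.le]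
    rw [mul_assoc, div_mul_cancel₀ _ (by positivity : y ^ ((1-ν)/2) ≠ 0),
        ← Real.rpow_add hxpos, show (1+ν)/2+(1-ν)/2 = (1:ℝ) by ring, Real.rpow_one]
  have hgm := Real.geom_mean_le_arith_mean2_weighted
    (w₁ := (1 + ν) / 2) (w₂ := (1 - ν) / 2)
    (p₁ := L * t ^ 2 / (1 + ν)) (p₂ := y)
    (by linarith) (by linarith) (by positivity) hypos.le (by ring)
  have hlhs : (L * t ^ 2 / (1 + ν)) ^ ((1 + ν) / 2) * y ^ ((1 - ν) / 2)
      = x * t ^ (1 + ν) := by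
    have ht2 : (t ^ 2 : ℝ) = t ^ ((2:ℝ)) := by
      rw [← Real.rpow_natCast t 2]; norm_num
    have : L * t ^ 2 / (1 + ν) = (L / (1 + ν)) * t ^ ((2:ℝ)) := by
      rw [← ht2]; ring
    rw [this, Real.mul_rpow (by positivity) (Real.rpow_nonneg ht _),
        ← Real.rpow_mul ht]
    have h2 : (2:ℝ) * ((1 + ν) / 2) = 1 + ν := by ring
    rw [h2]
    rw [mul_right_comm, hkey]
  have hrhs : (1 + ν) / 2 * (L * t ^ 2 / (1 + ν)) + (1 - ν) / 2 * y
      = L / 2 * t ^ 2 + δ := by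
    rw [hy]; field_simp
  calc Ltilde / (1 + ν) * t ^ (1 + ν) = x * t ^ (1 + ν) := by rw [hx]
    _ = (L * t ^ 2 / (1 + ν)) ^ ((1 + ν) / 2) * y ^ ((1 - ν) / 2) := hlhs.symm
    _ ≤ (1 + ν) / 2 * (L * t ^ 2 / (1 + ν)) + (1 - ν) / 2 * y := hgm
    _ = L / 2 * t ^ 2 + δ := hrhs
end

section
/- (Remark 1) Let Q ⊆ ℝ^n be convex, ν ∈ [0,1), L̃ > 0, δ > 0, and let h : ℝ^n → ℝ be differentiable on Q with ‖∇h(x₁) - ∇h(x₂)‖₂ ≤ L̃‖x₁ - x₂‖₂^ν for all x₁, x₂ ∈ Q. Set L = L̃ · ( L̃(1-ν) / (2δ(1+ν)) )^{(1-ν)/(1+ν)}. Then for all x₁, x₂ ∈ Q: h(x₂) ≤ h(x₁) + ⟨∇h(x₁), x₂ - x₁⟩ + (L/2)‖x₂ - x₁‖₂² + δ. -/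
/-!
Along the segment from `x₁` to `x₂ = x₁ + d`, the Hölder condition bounds the derivative of
`t ↦ h(x₁ + t d) - t ⟪∇h(x₁), d⟫` by `L̃ ‖d‖^{1+ν} t^ν`; integrating over `[0, 1]` gives the
Hölder descent inequality `h(x₂) ≤ h(x₁) + ⟪∇h(x₁), d⟫ + L̃/(1+ν) ‖d‖^{1+ν}`. The remaining term is
split by the weighted AM–GM inequality with weights `(1+ν)/2` and `(1-ν)/2`: the power `‖d‖^{1+ν}`
is the geometric mean of `‖d‖²` and a constant, which yields the quadratic term and `δ`.
-/

open scoped RealInnerProductSpace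
open Set

lemma le_add_div_of_hasDerivAt_le_mul_rpow {g g' : ℝ → ℝ} {K ν : ℝ} (hν : 0 ≤ ν)
    (hg : ∀ t ∈ Icc (0 : ℝ) 1, HasDerivAt g (g' t) t)
    (hg' : ∀ t ∈ Ioo (0 : ℝ) 1, g' t ≤ K * t ^ ν) :
    g 1 ≤ g 0 + K / (1 + ν) := by
  have h1ν : 1 + ν ≠ 0 := by positivity
  have hψ : ∀ t ∈ Icc (0 : ℝ) 1,
      HasDerivAt (fun s => g s - K / (1 + ν) * s ^ (1 + ν)) (g' t - K * t ^ ν) t := by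
    intro t ht
    refine ((hg t ht).sub ((Real.hasDerivAt_rpow_const (p := 1 + ν)
      (Or.inr (by linarith))).const_mul (K / (1 + ν)))).congr_deriv ?_
    rw [add_sub_cancel_left]
    field_simp
  have hanti : AntitoneOn (fun s => g s - K / (1 + ν) * s ^ (1 + ν)) (Icc 0 1) := by
    refine antitoneOn_of_deriv_nonpos (convex_Icc 0 1)
      (fun t ht => (hψ t ht).continuousAt.continuousWithinAt) ?_ ?_ <;>
      intro t ht <;> rw [interior_Icc] at ht
    · exact (hψ t (Ioo_subset_Icc_self ht)).differentiableAt.differentiableWithinAt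
    · rw [(hψ t (Ioo_subset_Icc_self ht)).deriv]
      linarith [hg' t ht]
  have := hanti (left_mem_Icc.2 zero_le_one) (right_mem_Icc.2 zero_le_one) zero_le_one
  simp only [Real.one_rpow, Real.zero_rpow h1ν] at this
  linarith

theorem HasGradientAt.hasDerivAt_add_smul_s6 {E : Type*} [NormedAddCommGroup E]
    [InnerProductSpace ℝ E] [CompleteSpace E] {f : E → ℝ} {x d g : E} {t : ℝ}
    (hf : HasGradientAt f g (x + t • d)) :
    HasDerivAt (fun s : ℝ => f (x + s • d)) ⟪g, d⟫ t := by
  have hline : HasDerivAt (fun s : ℝ => x + s • d) d t := by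
    simpa using ((hasDerivAt_id t).smul_const d).const_add x
  exact (hf.hasFDerivAt.comp_hasDerivAt t hline).congr_deriv (by simp)

theorem Convex.le_add_inner_add_mul_rpow_of_holder_gradient {E : Type*} [NormedAddCommGroup E]
    [InnerProductSpace ℝ E] [CompleteSpace E] {Q : Set E} (hQ : Convex ℝ Q) {f : E → ℝ}
    {f' : E → E} {C ν : ℝ} (hν : 0 ≤ ν) (hf : ∀ x ∈ Q, HasGradientAt f (f' x) x)
    (hC : ∀ x ∈ Q, ∀ y ∈ Q, ‖f' x - f' y‖ ≤ C * ‖x - y‖ ^ ν) {x y : E} (hx : x ∈ Q)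
    (hy : y ∈ Q) :
    f y ≤ f x + ⟪f' x, y - x⟫ + C / (1 + ν) * ‖y - x‖ ^ (1 + ν) := by
  set d := y - x
  have hmem : ∀ t ∈ Icc (0 : ℝ) 1, x + t • d ∈ Q := fun t ht => hQ.add_smul_sub_mem hx hy ht
  have key := le_add_div_of_hasDerivAt_le_mul_rpow (g := fun t => f (x + t • d) - t * ⟪f' x, d⟫)
    (K := C * ‖d‖ ^ (1 + ν)) hν
    (fun t ht => ((hf _ (hmem t ht)).hasDerivAt_add_smul_s6.sub
      ((hasDerivAt_id t).mul_const ⟪f' x, d⟫)).congr_deriv (by rw [one_mul]))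
    (fun t ht => by
      have ht0 : 0 ≤ t := ht.1.le
      calc ⟪f' (x + t • d), d⟫ - ⟪f' x, d⟫ = ⟪f' (x + t • d) - f' x, d⟫ :=
            (inner_sub_left _ _ _).symm
        _ ≤ ‖f' (x + t • d) - f' x‖ * ‖d‖ := real_inner_le_norm _ _
        _ ≤ C * ‖(x + t • d) - x‖ ^ ν * ‖d‖ := by
            gcongr
            exact hC _ (hmem t (Ioo_subset_Icc_self ht)) _ hx
        _ = C * ‖d‖ ^ (1 + ν) * t ^ ν := by
            rw [add_sub_cancel_left, norm_smul, Real.norm_of_nonneg ht0,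
              Real.mul_rpow ht0 (norm_nonneg d), Real.rpow_add' (norm_nonneg d) (by positivity),
              Real.rpow_one]
            ring)
  simp only [one_smul, zero_smul, add_zero, one_mul, zero_mul, sub_zero, d, add_sub_cancel,
    mul_div_right_comm] at key
  linarith

lemma rpow_mul_div_rpow_mul_rpow {A D w₁ w₂ : ℝ} (hA : 0 < A) (hD : 0 < D) (hw₁ : w₁ ≠ 0)
    (hw : w₁ + w₂ = 1) :
    (A * (A / D) ^ (w₂ / w₁)) ^ w₁ * D ^ w₂ = A := by
  rw [Real.mul_rpow hA.le (by positivity), ← Real.rpow_mul (by positivity),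
    div_mul_cancel₀ _ hw₁, Real.div_rpow hA.le hD.le, mul_assoc, div_mul_cancel₀ _ (by positivity),
    ← Real.rpow_add hA, hw, Real.rpow_one]

lemma div_mul_rpow_le_mul_sq_add {C δ ν r : ℝ} (hC : 0 < C) (hδ : 0 < δ) (hν0 : 0 ≤ ν)
    (hν1 : ν < 1) (hr : 0 ≤ r) :
    C / (1 + ν) * r ^ (1 + ν) ≤
      C * (C * (1 - ν) / (2 * δ * (1 + ν))) ^ ((1 - ν) / (1 + ν)) / 2 * r ^ 2 + δ := by
  have h1ν : 0 < 1 + ν := by linarith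
  have h2ν : 0 < 1 - ν := by linarith
  set A := C / (1 + ν)
  set D := 2 * δ / (1 - ν)
  set M := A * (A / D) ^ ((1 - ν) / 2 / ((1 + ν) / 2))
  have amgm := Real.geom_mean_le_arith_mean2_weighted (w₁ := (1 + ν) / 2) (w₂ := (1 - ν) / 2)
    (p₁ := M * r ^ 2) (p₂ := D) (by positivity) (by positivity) (by positivity) (by positivity)
    (by ring)
  have hgeom : (M * r ^ 2) ^ ((1 + ν) / 2) * D ^ ((1 - ν) / 2) = A * r ^ (1 + ν) := by
    rw [Real.mul_rpow (by positivity) (by positivity), mul_right_comm,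
      rpow_mul_div_rpow_mul_rpow (by positivity) (by positivity) (by positivity) (by ring),
      ← Real.rpow_natCast, ← Real.rpow_mul hr]
    norm_num [mul_div_cancel₀]
  have hM :
      (1 + ν) / 2 * M = C * (C * (1 - ν) / (2 * δ * (1 + ν))) ^ ((1 - ν) / (1 + ν)) / 2 := by
    have hK : A / D = C * (1 - ν) / (2 * δ * (1 + ν)) := by
      simp only [A, D]; field_simp
    have hs : (1 - ν) / 2 / ((1 + ν) / 2) = (1 - ν) / (1 + ν) := by field_simp
    simp only [M, hK, hs, A]
    field_simp
  have hD : (1 - ν) / 2 * D = δ := by simp only [D]; field_simp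
  rwa [hgeom, hD, ← mul_assoc, hM] at amgm

/-- Remark 1: A function with `ν`-Hölder continuous gradient (constant `L̃`,
`ν ∈ [0,1)`) on a convex set `Q` satisfies, for `L = L̃ (L̃(1-ν)/(2δ(1+ν)))^{(1-ν)/(1+ν)}`,
the inexact quadratic upper bound
`h(x₂) ≤ h(x₁) + ⟪∇h(x₁), x₂ - x₁⟫ + (L/2) ‖x₂ - x₁‖² + δ` on `Q`. -/
theorem stmt_6 {n : ℕ} (Q : Set (EuclideanSpace ℝ (Fin n))) (hQ : Convex ℝ Q)
    (ν : ℝ) (hν : ν ∈ Set.Ico (0 : ℝ) 1)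
    (Ltilde δ : ℝ) (hL : 0 < Ltilde) (hδ : 0 < δ)
    (h : EuclideanSpace ℝ (Fin n) → ℝ)
    (h' : EuclideanSpace ℝ (Fin n) → EuclideanSpace ℝ (Fin n))
    (hdiff : ∀ x ∈ Q, HasGradientAt h (h' x) x)
    (hHolder : ∀ x₁ ∈ Q, ∀ x₂ ∈ Q, ‖h' x₁ - h' x₂‖ ≤ Ltilde * ‖x₁ - x₂‖ ^ ν)
    (L : ℝ)
    (hLdef : L = Ltilde * (Ltilde * (1 - ν) / (2 * δ * (1 + ν))) ^ ((1 - ν) / (1 + ν))) :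
    ∀ x₁ ∈ Q, ∀ x₂ ∈ Q,
      h x₂ ≤ h x₁ + ⟪h' x₁, x₂ - x₁⟫ + L / 2 * ‖x₂ - x₁‖ ^ 2 + δ := by
  intro x₁ hx₁ x₂ hx₂
  have descent := hQ.le_add_inner_add_mul_rpow_of_holder_gradient hν.1 hdiff hHolder hx₁ hx₂
  have split := div_mul_rpow_le_mul_sq_add hL hδ hν.1 hν.2 (norm_nonneg (x₂ - x₁))
  rw [hLdef]
  linarith
end
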